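/- arXiv:2504.00480 — 5 statements merged into one kernel-verified Lean document; each statement's English description precedes it below -/
import Mathlib

section
/- For any length-scale ℓ > 0 and any r ∈ [-1/2, 1/2], the error between the univariate Matérn(1/2) kernel κ(r) = exp(-|r|/ℓ) and its 1-periodization satisfies |κ(r) - ∑_{n∈ℤ} exp(-|r+n|/ℓ)| = ∑_{n∈ℤ, n≠0} exp(-|r+n|/ℓ) ≤ exp(-1/(2ℓ))·(1+2ℓ). -/
/-!
For `|r| ≤ 1/2` the terms with `n ≥ 1` and with `n ≤ -1` form two geometric series of ratio
`q = exp (-1/ℓ)`, so the error is `(exp (-(1+r)/ℓ) + exp (-(1-r)/ℓ)) / (1 - q)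
= 2 q cosh (r/ℓ) / (1 - q)`. Since `cosh` grows with `|r|`, the worst case is `|r| = 1/2`, where
the error is `exp (-1/(2ℓ)) * coth (1/(2ℓ))`, and `coth y ≤ 1 + 1/y` amounts to `1 + 2y ≤ exp (2y)`.
-/

open Real

theorem hasSum_int_ne_zero_iff {G : Type*} [AddCommGroup G] [TopologicalSpace G]
    [IsTopologicalAddGroup G] {f : ℤ → G} {a : G} :
    HasSum (fun n : {n : ℤ // n ≠ 0} => f n) a ↔ HasSum f (f 0 + a) :=
  (hasSum_singleton 0 f).hasSum_compl_iff

theorem exp_neg_one_div_lt_one {ℓ : ℝ} (hℓ : 0 < ℓ) : exp (-1 / ℓ) < 1 :=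
  exp_lt_one_iff.mpr (div_neg_of_neg_of_pos (by norm_num) hℓ)

theorem hasSum_exp_neg_abs_add_nat_succ {ℓ r : ℝ} (hℓ : 0 < ℓ) (hr : -1 ≤ r) :
    HasSum (fun k : ℕ => exp (-|r + (k + 1)| / ℓ))
      (exp (-(1 + r) / ℓ) / (1 - exp (-1 / ℓ))) := by
  have hterm (k : ℕ) : exp (-|r + (k + 1)| / ℓ) = exp (-(1 + r) / ℓ) * exp (-1 / ℓ) ^ k := by
    rw [abs_of_nonneg (by linarith [k.cast_nonneg (α := ℝ)]), ← exp_nat_mul, ← exp_add]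
    congr 1
    field_simp
    ring
  rw [funext hterm, div_eq_mul_inv (exp _)]
  exact (hasSum_geometric_of_lt_one (exp_pos _).le (exp_neg_one_div_lt_one hℓ)).mul_left _

theorem hasSum_exp_neg_abs_add_int_ne_zero {ℓ r : ℝ} (hℓ : 0 < ℓ) (hr : |r| ≤ 1) :
    HasSum (fun n : {n : ℤ // n ≠ 0} => exp (-|r + n| / ℓ))
      ((exp (-(1 + r) / ℓ) + exp (-(1 - r) / ℓ)) / (1 - exp (-1 / ℓ))) := by
  obtain ⟨hr₁, hr₂⟩ := abs_le.mp hr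
  set f : ℤ → ℝ := fun n => exp (-|r + n| / ℓ)
  have hpos : HasSum (fun k : ℕ => f (k + 1)) (exp (-(1 + r) / ℓ) / (1 - exp (-1 / ℓ))) := by
    convert hasSum_exp_neg_abs_add_nat_succ hℓ hr₁ using 1
    simp [f]
  have hneg : HasSum (fun k : ℕ => f (-(k + 1))) (exp (-(1 - r) / ℓ) / (1 - exp (-1 / ℓ))) := by
    convert hasSum_exp_neg_abs_add_nat_succ (r := -r) hℓ (by linarith) using 1
    · ext k
      simp only [f]
      rw [← abs_neg]
      push_cast
      ring_nf
    · ring_nf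
  refine (hasSum_int_ne_zero_iff (f := f)).mpr ?_
  have h := hpos.of_add_one_of_neg_add_one hneg
  rwa [add_comm (_ / _) (f 0), add_assoc, ← add_div] at h

theorem exp_neg_one_add_add_exp_neg_one_sub_le {ℓ r s : ℝ} (hrs : |r| ≤ |s|) :
    exp (-(1 + r) / ℓ) + exp (-(1 - r) / ℓ) ≤ exp (-(1 + s) / ℓ) + exp (-(1 - s) / ℓ) := by
  have hsplit (x : ℝ) :
      exp (-(1 + x) / ℓ) + exp (-(1 - x) / ℓ) = exp (-1 / ℓ) * (2 * cosh (x / ℓ)) := by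
    rw [cosh_eq, mul_div_cancel₀ _ two_ne_zero, mul_add, ← exp_add, ← exp_add]
    ring_nf
  rw [hsplit, hsplit]
  gcongr
  rw [cosh_le_cosh, abs_div, abs_div]
  gcongr

theorem one_add_exp_neg_one_div_div_one_sub_exp_neg_one_div_le {ℓ : ℝ} (hℓ : 0 < ℓ) :
    (1 + exp (-1 / ℓ)) / (1 - exp (-1 / ℓ)) ≤ 1 + 2 * ℓ := by
  set q := exp (-1 / ℓ)
  have key : q * (1 / ℓ + 1) ≤ 1 := by
    calc q * (1 / ℓ + 1) ≤ q * exp (1 / ℓ) := by gcongr; exact add_one_le_exp _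
      _ = 1 := by rw [← exp_add, neg_div, neg_add_cancel, exp_zero]
  have hgap : (1 + 2 * ℓ) * (1 - q) - (1 + q) = 2 * ℓ * (1 - q * (1 / ℓ + 1)) := by
    field_simp
    ring
  rw [div_le_iff₀ (sub_pos.mpr (exp_neg_one_div_lt_one hℓ))]
  nlinarith

theorem matern1d_periodization_error (ℓ : ℝ) (hℓ : 0 < ℓ) (r : ℝ)
    (hr : r ∈ Set.Icc (-(1:ℝ)/2) (1/2)) :
    |Real.exp (-|r|/ℓ) - ∑' n : ℤ, Real.exp (-|r + (n:ℝ)|/ℓ)|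
      = ∑' n : {n : ℤ // n ≠ 0}, Real.exp (-|r + ((n : ℤ) : ℝ)|/ℓ) ∧
    ∑' n : {n : ℤ // n ≠ 0}, Real.exp (-|r + ((n : ℤ) : ℝ)|/ℓ)
      ≤ Real.exp (-1/(2*ℓ)) * (1 + 2*ℓ) := by
  have hr' : |r| ≤ 1 / 2 := abs_le.mpr ⟨by linarith [hr.1], hr.2⟩
  have hS := hasSum_exp_neg_abs_add_int_ne_zero hℓ (hr'.trans (by norm_num))
  have hf := (hasSum_int_ne_zero_iff (f := fun n : ℤ => exp (-|r + n| / ℓ))).mp hS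
  simp only [Int.cast_zero, add_zero] at hf
  rw [hS.tsum_eq, hf.tsum_eq, sub_add_cancel_left, abs_neg,
    abs_of_nonneg (hS.nonneg fun _ => (exp_pos _).le)]
  refine ⟨rfl, ?_⟩
  calc _ ≤ (exp (-(1 + 1 / 2) / ℓ) + exp (-(1 - 1 / 2) / ℓ)) / (1 - exp (-1 / ℓ)) :=
        div_le_div_of_nonneg_right
          (exp_neg_one_add_add_exp_neg_one_sub_le (hr'.trans (le_abs_self _)))
          (sub_nonneg.mpr (exp_neg_one_div_lt_one hℓ).le)
    _ = exp (-1 / (2 * ℓ)) * ((1 + exp (-1 / ℓ)) / (1 - exp (-1 / ℓ))) := by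
        rw [mul_div_assoc', mul_add, mul_one, ← exp_add]
        ring_nf
    _ ≤ exp (-1 / (2 * ℓ)) * (1 + 2 * ℓ) := by
        gcongr
        exact one_add_exp_neg_one_div_div_one_sub_exp_neg_one_div_le hℓ
end

section
/- For ℓ > 0 and any point r ∈ [-1/2,1/2)³, the difference between the trivariate Matérn(1/2) kernel κ(r) = exp(-‖r‖₂/ℓ) and its 1-periodization κ̃(r) = ∑_{n∈ℤ³} exp(-‖r+n‖₂/ℓ) satisfies |κ(r) - κ̃(r)| ≤ δ(ℓ), where δ(ℓ) = 3e^{-1/(2√3 ℓ)}(1+2√3 ℓ) + 3e^{-1/(√3 ℓ)}(1+2√3 ℓ)² + e^{-3/(2√3 ℓ)}(1+2√3 ℓ)³. -/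
/-! Since `‖v‖₂ ≥ ‖v‖₁ / √3` on `ℝ³`, each term `exp (-‖r + n‖ / ℓ)` is dominated by the product
`∏ᵢ exp (-a |rᵢ + nᵢ|)` with `a = 1 / (√3 ℓ)`, so the lattice sum over `n ≠ 0` is at most
`∏ᵢ ∑ₖ exp (-a |rᵢ + k|) - ∏ᵢ exp (-a |rᵢ|)`. For `|x| ≤ 1/2` the one-dimensional sum over `k ≠ 0`
consists of two geometric series with total `2 cosh (a x) / (eᵃ - 1) ≤ e^{-a/2} (1 + 2/a) =: S`.
Each of the three factors thus exceeds its `k = 0` term, which is at most `1`, by at most `S`, so the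
difference of the products is at most `(1 + S)³ - 1 = 3S + 3S² + S³`, which is `δ(ℓ)`. -/

open Real

lemma hasSum_exp_neg_mul_abs_add_int {a x : ℝ} (ha : 0 < a) (hx : |x| ≤ 1) :
    HasSum (fun k : ℤ => exp (-a * |x + k|)) (exp (-a * |x|) + 2 * cosh (a * x) / (exp a - 1)) := by
  have hq1 : exp (-a) < 1 := exp_lt_one_iff.mpr (by linarith)
  have hgeom := hasSum_geometric_of_lt_one (exp_pos (-a)).le hq1
  have hpos : HasSum (fun n : ℕ => exp (-a * |x + ((n + 1 : ℕ) : ℤ)|))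
      (exp (-a * (x + 1)) * (1 - exp (-a))⁻¹) := by
    have h (n : ℕ) : exp (-a * |x + ((n + 1 : ℕ) : ℤ)|) = exp (-a * (x + 1)) * exp (-a) ^ n := by
      have : 0 ≤ x + (n + 1) := by linarith [neg_abs_le x, (n.cast_nonneg : (0 : ℝ) ≤ n)]
      push_cast
      rw [abs_of_nonneg this, ← exp_nat_mul, ← exp_add]
      ring_nf
    simpa only [h] using hgeom.mul_left (exp (-a * (x + 1)))
  have hneg : HasSum (fun n : ℕ => exp (-a * |x + ((-((n : ℤ) + 1) : ℤ) : ℝ)|))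
      (exp (a * (x - 1)) * (1 - exp (-a))⁻¹) := by
    have h (n : ℕ) :
        exp (-a * |x + ((-((n : ℤ) + 1) : ℤ) : ℝ)|) = exp (a * (x - 1)) * exp (-a) ^ n := by
      have : x + -(n + 1) ≤ 0 := by linarith [le_abs_self x, (n.cast_nonneg : (0 : ℝ) ≤ n)]
      push_cast
      rw [abs_of_nonpos this, ← exp_nat_mul, ← exp_add]
      ring_nf
    simpa only [h] using hgeom.mul_left (exp (a * (x - 1)))
  convert HasSum.of_nat_of_neg_add_one (f := fun k : ℤ => exp (-a * |x + k|)) hpos.zero_add hneg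
    using 1
  have hea : exp a - 1 ≠ 0 := (sub_pos.mpr (one_lt_exp_iff.mpr ha)).ne'
  have e1 : exp (-a * (x + 1)) = (exp (a * x) * exp a)⁻¹ := by
    rw [← exp_add, ← exp_neg]; ring_nf
  have e2 : exp (a * (x - 1)) = exp (a * x) / exp a := by
    rw [← exp_sub]; ring_nf
  rw [e1, e2, exp_neg a, cosh_eq, exp_neg (a * x)]
  simp only [Nat.cast_zero, Int.cast_zero, add_zero]
  field_simp
  ring

lemma two_mul_cosh_div_exp_sub_one_le {a x : ℝ} (ha : 0 < a) (hx : |x| ≤ 1 / 2) :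
    2 * cosh (a * x) / (exp a - 1) ≤ exp (-a / 2) * (1 + 2 / a) := by
  have hE : a ≤ exp a - 1 := by linarith [add_one_le_exp a]
  have hcosh : cosh (a * x) ≤ cosh (a / 2) := by
    rw [cosh_le_cosh, abs_mul, abs_of_pos ha, abs_of_pos (half_pos ha)]
    nlinarith
  have htwo_cosh : 2 * cosh (a / 2) = exp (-a / 2) * (exp a + 1) := by
    rw [cosh_eq, mul_add, ← exp_add, neg_div]
    ring_nf
  calc 2 * cosh (a * x) / (exp a - 1) ≤ 2 * cosh (a / 2) / (exp a - 1) := by gcongr; linarith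
    _ = exp (-a / 2) * (1 + 2 / (exp a - 1)) := by
      have : exp a - 1 ≠ 0 := by linarith
      rw [htwo_cosh]; field_simp; ring
    _ ≤ exp (-a / 2) * (1 + 2 / a) := by gcongr

lemma exp_neg_mul_abs_le_tsum_exp_neg_mul_abs_add_int {a x : ℝ} (ha : 0 < a) (hx : |x| ≤ 1) :
    exp (-a * |x|) ≤ ∑' k : ℤ, exp (-a * |x + k|) := by
  rw [(hasSum_exp_neg_mul_abs_add_int ha hx).tsum_eq]
  exact le_add_of_nonneg_right (div_nonneg (by positivity) (sub_nonneg.mpr (one_le_exp ha.le)))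

lemma tsum_exp_neg_mul_abs_add_int_le {a x : ℝ} (ha : 0 < a) (hx : |x| ≤ 1 / 2) :
    ∑' k : ℤ, exp (-a * |x + k|) ≤ exp (-a * |x|) + exp (-a / 2) * (1 + 2 / a) := by
  rw [(hasSum_exp_neg_mul_abs_add_int ha (hx.trans (by norm_num))).tsum_eq]
  exact add_le_add_right (two_mul_cosh_div_exp_sub_one_le ha hx) _

lemma prod_sub_prod_le_one_add_pow_card_sub_one {ι : Type*} (s : Finset ι) {x y : ι → ℝ} {S : ℝ}
    (hx0 : ∀ i ∈ s, 0 ≤ x i) (hx1 : ∀ i ∈ s, x i ≤ 1) (hxy : ∀ i ∈ s, x i ≤ y i)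
    (hyS : ∀ i ∈ s, y i ≤ x i + S) :
    ∏ i ∈ s, y i - ∏ i ∈ s, x i ≤ (1 + S) ^ s.card - 1 := by
  classical
  induction s using Finset.induction_on with
  | empty => simp
  | insert j s hj ih =>
    simp only [Finset.mem_insert, forall_eq_or_imp] at hx0 hx1 hxy hyS
    have hQP : ∏ i ∈ s, x i ≤ ∏ i ∈ s, y i := Finset.prod_le_prod hx0.2 hxy.2
    have hP : ∏ i ∈ s, y i ≤ (1 + S) ^ s.card := by
      rw [← Finset.prod_const]
      exact Finset.prod_le_prod (fun i hi => (hx0.2 i hi).trans (hxy.2 i hi))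
        (fun i hi => (hyS.2 i hi).trans (by linarith [hx1.2 i hi]))
    have hPQ := ih hx0.2 hx1.2 hxy.2 hyS.2
    rw [Finset.prod_insert hj, Finset.prod_insert hj, Finset.card_insert_of_notMem hj, pow_succ]
    nlinarith [mul_le_mul_of_nonneg_right (sub_le_iff_le_add'.mpr hyS.1)
        ((Finset.prod_nonneg hx0.2).trans hQP),
      mul_le_mul_of_nonneg_right hx1.1 (sub_nonneg.mpr hQP)]

lemma EuclideanSpace.sum_abs_le_sqrt_card_mul_norm {ι : Type*} [Fintype ι]
    (v : EuclideanSpace ℝ ι) : ∑ i, |v i| ≤ √(Fintype.card ι) * ‖v‖ := by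
  calc ∑ i, |v i| ≤ √(Fintype.card ι * ∑ i, |v i| ^ 2) :=
        le_sqrt_of_sq_le (sq_sum_le_card_mul_sum_sq (s := Finset.univ) (f := fun i => |v i|))
    _ = √(Fintype.card ι) * ‖v‖ := by
        rw [sqrt_mul (Nat.cast_nonneg _), EuclideanSpace.norm_eq]
        simp only [norm_eq_abs]

lemma exp_neg_mul_norm_le_prod_exp_neg_mul_abs {ι : Type*} [Fintype ι] {a : ℝ} (ha : 0 ≤ a)
    (v : EuclideanSpace ℝ ι) : exp (-(a * √(Fintype.card ι)) * ‖v‖) ≤ ∏ i, exp (-a * |v i|) := by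
  rw [← exp_sum, exp_le_exp, ← Finset.mul_sum, neg_mul, neg_mul, neg_le_neg_iff, mul_assoc]
  exact mul_le_mul_of_nonneg_left (EuclideanSpace.sum_abs_le_sqrt_card_mul_norm v) ha

section ProductDomination

variable {ι β : Type*} [Fintype ι] {f : ι → β → ℝ}

lemma sum_prod_apply_le_prod_tsum (hf : ∀ i, Summable (f i)) (hf0 : ∀ i k, 0 ≤ f i k)
    (s : Finset (ι → β)) : ∑ n ∈ s, ∏ i, f i (n i) ≤ ∏ i, ∑' k, f i k := by
  classical
  let t : ι → Finset β := fun i => s.image (· i)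
  calc ∑ n ∈ s, ∏ i, f i (n i) ≤ ∑ n ∈ Fintype.piFinset t, ∏ i, f i (n i) :=
        Finset.sum_le_sum_of_subset_of_nonneg
          (fun n hn => Fintype.mem_piFinset.mpr fun i => Finset.mem_image_of_mem _ hn)
          (fun n _ _ => Finset.prod_nonneg fun i _ => hf0 i _)
    _ = ∏ i, ∑ k ∈ t i, f i k := (Finset.prod_univ_sum t f).symm
    _ ≤ ∏ i, ∑' k, f i k :=
        Finset.prod_le_prod (fun i _ => Finset.sum_nonneg fun k _ => hf0 i k)
          (fun i _ => (hf i).sum_le_tsum _ fun k _ => hf0 i k)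

lemma abs_sub_tsum_le_of_le_prod (hf : ∀ i, Summable (f i)) (hf0 : ∀ i k, 0 ≤ f i k)
    {g : (ι → β) → ℝ} (hg0 : ∀ n, 0 ≤ g n) (hgf : ∀ n, g n ≤ ∏ i, f i (n i)) (b : ι → β) :
    |g b - ∑' n, g n| ≤ ∏ i, ∑' k, f i k - ∏ i, f i (b i) := by
  set F : (ι → β) → ℝ := fun n => ∏ i, f i (n i)
  have hF : Summable F := summable_of_sum_le (fun n => Finset.prod_nonneg fun i _ => hf0 i _)
    (sum_prod_apply_le_prod_tsum hf hf0)
  have hg : Summable g := Summable.of_nonneg_of_le hg0 hgf hF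
  have hgb : g b ≤ ∑' n, g n := hg.le_tsum b fun n _ => hg0 n
  have hFgb : F b - g b ≤ ∑' n, F n - ∑' n, g n := by
    rw [← hF.tsum_sub hg]
    exact (hF.sub hg).le_tsum b fun n _ => sub_nonneg.mpr (hgf n)
  have hFtsum : ∑' n, F n ≤ ∏ i, ∑' k, f i k :=
    tsum_le_of_sum_le' (Finset.prod_nonneg fun i _ => tsum_nonneg (hf0 i))
      (sum_prod_apply_le_prod_tsum hf hf0)
  rw [abs_sub_comm, abs_of_nonneg (sub_nonneg.mpr hgb)]
  linarith

end ProductDomination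

lemma one_add_pow_three_sub_one_eq {s ℓ : ℝ} (hs : s ≠ 0) (hℓ : ℓ ≠ 0) :
    (1 + exp (-(s * ℓ)⁻¹ / 2) * (1 + 2 / (s * ℓ)⁻¹)) ^ 3 - 1
      = 3 * exp (-1 / (2 * s * ℓ)) * (1 + 2 * s * ℓ)
        + 3 * exp (-1 / (s * ℓ)) * (1 + 2 * s * ℓ) ^ 2
        + exp (-3 / (2 * s * ℓ)) * (1 + 2 * s * ℓ) ^ 3 := by
  have h1 : exp (-(s * ℓ)⁻¹ / 2) = exp (-1 / (2 * s * ℓ)) := by congr 1; field_simp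
  have h2 : exp (-1 / (s * ℓ)) = exp (-1 / (2 * s * ℓ)) ^ 2 := by
    rw [← exp_nat_mul]; congr 1; field_simp; norm_num
  have h3 : exp (-3 / (2 * s * ℓ)) = exp (-1 / (2 * s * ℓ)) ^ 3 := by
    rw [← exp_nat_mul]; congr 1; field_simp; norm_num
  rw [h1, h2, h3, div_inv_eq_mul]
  ring

theorem matern3d_periodization_error (ℓ : ℝ) (hℓ : 0 < ℓ)
    (r : EuclideanSpace ℝ (Fin 3)) (hr : ∀ j, r j ∈ Set.Ico (-(1:ℝ)/2) (1/2)) :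
    |Real.exp (-‖r‖/ℓ) -
        ∑' n : Fin 3 → ℤ,
          Real.exp (-‖(show EuclideanSpace ℝ (Fin 3) from WithLp.toLp 2 (fun i => r i + (n i : ℝ)))‖/ℓ)|
      ≤ 3 * Real.exp (-1/(2*Real.sqrt 3*ℓ)) * (1 + 2*Real.sqrt 3*ℓ)
        + 3 * Real.exp (-1/(Real.sqrt 3*ℓ)) * (1 + 2*Real.sqrt 3*ℓ)^2
        + Real.exp (-3/(2*Real.sqrt 3*ℓ)) * (1 + 2*Real.sqrt 3*ℓ)^3 := by
  set a : ℝ := (√3 * ℓ)⁻¹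
  have ha : 0 < a := by positivity
  have hr_half (i : Fin 3) : |r i| ≤ 1 / 2 := abs_le.mpr ⟨by linarith [(hr i).1], (hr i).2.le⟩
  have hr_one (i : Fin 3) : |r i| ≤ 1 := (hr_half i).trans (by norm_num)
  have hdom (w : EuclideanSpace ℝ (Fin 3)) : exp (-‖w‖ / ℓ) ≤ ∏ i, exp (-a * |w i|) := by
    convert exp_neg_mul_norm_le_prod_exp_neg_mul_abs ha.le w using 2
    simp only [a, Fintype.card_fin, Nat.cast_ofNat]
    field_simp
  have hlattice := abs_sub_tsum_le_of_le_prod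
    (fun i => (hasSum_exp_neg_mul_abs_add_int ha (hr_one i)).summable) (fun _ _ => (exp_pos _).le)
    (fun _ => (exp_pos _).le) (fun n => hdom (WithLp.toLp 2 fun i => r i + n i)) 0
  simp only [Pi.zero_apply, Int.cast_zero, add_zero, WithLp.toLp_ofLp] at hlattice
  have hfactors := prod_sub_prod_le_one_add_pow_card_sub_one Finset.univ
    (x := fun i => exp (-a * |r i|)) (y := fun i => ∑' k : ℤ, exp (-a * |r i + k|))
    (fun i _ => (exp_pos _).le) (fun i _ => exp_le_one_iff.mpr (by nlinarith [abs_nonneg (r i)]))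
    (fun i _ => exp_neg_mul_abs_le_tsum_exp_neg_mul_abs_add_int ha (hr_one i))
    (fun i _ => tsum_exp_neg_mul_abs_add_int_le ha (hr_half i))
  rw [Finset.card_univ, Fintype.card_fin, one_add_pow_three_sub_one_eq (by positivity) hℓ.ne']
    at hfactors
  exact hlattice.trans hfactors
end

section
/- For ℓ with 0 < ℓ < 1/2 and any r ∈ [-1/2,1/2], ∑_{n∈ℤ, n≠0} (|r+n|/ℓ²)·exp(-|r+n|/ℓ) ≤ e^{-1/(2ℓ)}(1+2ℓ+4ℓ²)/(2ℓ²). -/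
open Real

/-!
For `0 ≤ r ≤ 1/2` the distance `|r + n|` is at least `n` when `n > 0` and at least `|n| - 1/2`
when `n < 0`. These lower bounds are pairwise distinct half-integers `j/2 ≥ 1/2 ≥ ℓ`, and
`x ↦ x e^{-x/ℓ}` decreases on `[ℓ, ∞)`, so the series is dominated by
`∑_{j ≥ 1} (j / 2ℓ²) aʲ = a / (2ℓ² (1 - a)²)` with `a = e^{-1/(2ℓ)}`; negative `r` reduce to this
case through `n ↦ -n`. Finally `e^x ≥ 1 + x + x²/2` at `x = 1/(2ℓ)` gives
`(1 - a)⁻² ≤ 1 + 2ℓ + 4ℓ²`.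
-/

noncomputable def maternHalfDeriv (ℓ r : ℝ) : ℝ := |r| / ℓ ^ 2 * exp (-|r| / ℓ)

lemma maternHalfDeriv_nonneg (ℓ r : ℝ) : 0 ≤ maternHalfDeriv ℓ r := by
  unfold maternHalfDeriv; positivity

lemma maternHalfDeriv_even (ℓ : ℝ) : Function.Even (maternHalfDeriv ℓ) := by
  intro r; simp only [maternHalfDeriv, abs_neg]

lemma mul_exp_neg_div_antitoneOn {ℓ : ℝ} (hℓ : 0 < ℓ) :
    AntitoneOn (fun x => x * exp (-x / ℓ)) (Set.Ici ℓ) := by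
  intro x (hx : ℓ ≤ x) y _ hxy
  have hy : y ≤ x * exp ((y - x) / ℓ) := by
    have hlin : y - x ≤ x * ((y - x) / ℓ) := by
      rw [mul_div_assoc', le_div_iff₀ hℓ]
      nlinarith
    calc y ≤ x * ((y - x) / ℓ + 1) := by linarith
      _ ≤ x * exp ((y - x) / ℓ) :=
        mul_le_mul_of_nonneg_left (add_one_le_exp _) (hℓ.le.trans hx)
  calc y * exp (-y / ℓ) ≤ x * exp ((y - x) / ℓ) * exp (-y / ℓ) := by gcongr
    _ = x * exp (-x / ℓ) := by rw [mul_assoc, ← exp_add]; ring_nf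

lemma maternHalfDeriv_antitoneOn {ℓ : ℝ} (hℓ : 0 < ℓ) :
    AntitoneOn (maternHalfDeriv ℓ) (Set.Ici ℓ) := by
  intro x (hx : ℓ ≤ x) y (hy : ℓ ≤ y) hxy
  have h := mul_exp_neg_div_antitoneOn hℓ hx hy hxy
  simp only [maternHalfDeriv, abs_of_pos (hℓ.trans_le hx), abs_of_pos (hℓ.trans_le hy)]
  simp only at h
  rw [div_mul_eq_mul_div, div_mul_eq_mul_div]
  gcongr

lemma hasSum_maternHalfDeriv_half_nat {ℓ : ℝ} (hℓ : 0 < ℓ) :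
    HasSum (fun j : ℕ => maternHalfDeriv ℓ (j / 2))
      (exp (-1 / (2 * ℓ)) / (2 * ℓ ^ 2 * (1 - exp (-1 / (2 * ℓ))) ^ 2)) := by
  set a := exp (-1 / (2 * ℓ))
  have ha : ‖a‖ < 1 := by
    rw [norm_of_nonneg (exp_pos _).le, Real.exp_lt_one_iff]
    exact div_neg_of_neg_of_pos (by norm_num) (by positivity)
  have hterm (j : ℕ) : maternHalfDeriv ℓ (j / 2) = 1 / (2 * ℓ ^ 2) * (j * a ^ j) := by
    have hexp : exp (-|(j : ℝ) / 2| / ℓ) = a ^ j := by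
      rw [← exp_nat_mul, abs_of_nonneg (by positivity)]
      ring_nf
    rw [maternHalfDeriv, hexp, abs_of_nonneg (by positivity)]
    ring
  have hsum : a / (2 * ℓ ^ 2 * (1 - a) ^ 2) = 1 / (2 * ℓ ^ 2) * (a / (1 - a) ^ 2) := by
    field_simp
  simpa only [hterm, hsum] using (hasSum_coe_mul_geometric_of_norm_lt_one ha).mul_left _

lemma tsum_nonzero_int_neg_add_of_even {α : Type*} [AddCommMonoid α] [TopologicalSpace α]
    {f : ℝ → α} (hf : Function.Even f) (r : ℝ) :
    ∑' n : {n : ℤ // n ≠ 0}, f (-r + n) = ∑' n : {n : ℤ // n ≠ 0}, f (r + n) := by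
  rw [← ((Equiv.neg ℤ).subtypeEquiv (p := (· ≠ 0)) (q := (· ≠ 0)) (by simp)).tsum_eq]
  refine tsum_congr fun n => ?_
  rw [← hf]
  simp only [Equiv.subtypeEquiv_apply, Equiv.neg_apply, Int.cast_neg]
  ring_nf

def interleaveNat (n : ℤ) : ℕ := if 0 < n then 2 * n.natAbs else 2 * n.natAbs - 1

lemma interleaveNat_injective :
    Function.Injective (fun n : {n : ℤ // n ≠ 0} => interleaveNat n) := by
  rintro ⟨m, hm⟩ ⟨n, hn⟩ h
  simp only [interleaveNat] at h
  rw [Subtype.mk.injEq]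
  split_ifs at h <;> omega

lemma one_le_interleaveNat {n : ℤ} (hn : n ≠ 0) : 1 ≤ interleaveNat n := by
  unfold interleaveNat; split_ifs <;> omega

lemma interleaveNat_le_two_mul_abs_add {r : ℝ} (hr₀ : 0 ≤ r) (hr₁ : r ≤ 1 / 2) (n : ℤ) :
    (interleaveNat n : ℝ) ≤ 2 * |r + n| := by
  rcases lt_trichotomy n 0 with hneg | rfl | hpos
  · have hcast : (interleaveNat n : ℤ) = -2 * n - 1 := by unfold interleaveNat; split_ifs <;> omega
    have hn : (n : ℝ) ≤ -1 := by exact_mod_cast (by omega : n ≤ -1)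
    rw [← Int.cast_natCast, hcast, abs_of_neg (by linarith)]
    push_cast; linarith
  · simp [interleaveNat]
  · have hcast : (interleaveNat n : ℤ) = 2 * n := by unfold interleaveNat; split_ifs <;> omega
    have hn : (0 : ℝ) < n := by exact_mod_cast hpos
    rw [← Int.cast_natCast, hcast, abs_of_pos (by linarith)]
    push_cast; linarith

lemma tsum_maternHalfDeriv_shift_le {ℓ r : ℝ} (hℓ : 0 < ℓ) (hℓ' : ℓ ≤ 1 / 2) (hr₀ : 0 ≤ r)
    (hr₁ : r ≤ 1 / 2) :
    ∑' n : {n : ℤ // n ≠ 0}, maternHalfDeriv ℓ (r + n) ≤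
      exp (-1 / (2 * ℓ)) / (2 * ℓ ^ 2 * (1 - exp (-1 / (2 * ℓ))) ^ 2) := by
  have hsum := hasSum_maternHalfDeriv_half_nat hℓ
  have hle (n : {n : ℤ // n ≠ 0}) :
      maternHalfDeriv ℓ (r + n) ≤ maternHalfDeriv ℓ (interleaveNat n / 2) := by
    have hj : (1 : ℝ) ≤ interleaveNat n := by exact_mod_cast one_le_interleaveNat n.2
    have hjr := interleaveNat_le_two_mul_abs_add hr₀ hr₁ n
    calc maternHalfDeriv ℓ (r + n) = maternHalfDeriv ℓ |r + n| := by
          simp only [maternHalfDeriv, abs_abs]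
      _ ≤ maternHalfDeriv ℓ (interleaveNat n / 2) :=
          maternHalfDeriv_antitoneOn hℓ (show ℓ ≤ _ by linarith) (show ℓ ≤ _ by linarith)
            (by linarith)
  have hsummable : Summable fun n : {n : ℤ // n ≠ 0} => maternHalfDeriv ℓ (r + n) :=
    .of_nonneg_of_le (fun _ => maternHalfDeriv_nonneg _ _) hle
      (hsum.summable.comp_injective interleaveNat_injective)
  rw [← hsum.tsum_eq]
  exact hsummable.tsum_le_tsum_of_inj _ interleaveNat_injective
    (fun _ _ => maternHalfDeriv_nonneg _ _) hle hsum.summable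

lemma one_div_sq_one_sub_exp_neg_one_div_le {t : ℝ} (ht : 0 < t) :
    1 / (1 - exp (-1 / t)) ^ 2 ≤ 1 + t + t ^ 2 := by
  set a := exp (-1 / t)
  have ha : a * (2 * t ^ 2 + 2 * t + 1) ≤ 2 * t ^ 2 := by
    have hquad := quadratic_le_exp_of_nonneg (x := 1 / t) (by positivity)
    have hinv : a * exp (1 / t) = 1 := by rw [← exp_add]; ring_nf; exact exp_zero
    have hpoly : 2 * t ^ 2 + 2 * t + 1 = 2 * t ^ 2 * (1 + 1 / t + (1 / t) ^ 2 / 2) := by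
      field_simp
    calc a * (2 * t ^ 2 + 2 * t + 1) = 2 * t ^ 2 * (a * (1 + 1 / t + (1 / t) ^ 2 / 2)) := by
          rw [hpoly]; ring
      _ ≤ 2 * t ^ 2 * (a * exp (1 / t)) := by gcongr
      _ = 2 * t ^ 2 := by rw [hinv, mul_one]
  have hlow : 2 * t + 1 ≤ (1 - a) * (2 * t ^ 2 + 2 * t + 1) := by linarith
  have hgap : 0 < 1 - a := by nlinarith
  rw [div_le_iff₀ (by positivity)]
  nlinarith [pow_le_pow_left₀ (by positivity) hlow 2]

theorem derivative_matern1d_periodization_error (ℓ : ℝ) (hℓ : 0 < ℓ) (hℓ' : ℓ < 1/2)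
    (r : ℝ) (hr : r ∈ Set.Icc (-(1:ℝ)/2) (1/2)) :
    ∑' n : {n : ℤ // n ≠ 0}, (|r + ((n : ℤ) : ℝ)|/ℓ^2) * Real.exp (-|r + ((n : ℤ) : ℝ)|/ℓ)
      ≤ Real.exp (-1/(2*ℓ)) * (1 + 2*ℓ + 4*ℓ^2) / (2*ℓ^2) := by
  obtain ⟨hr₀, hr₁⟩ := hr
  change ∑' n : {n : ℤ // n ≠ 0}, maternHalfDeriv ℓ (r + n) ≤ _
  have hsum : ∑' n : {n : ℤ // n ≠ 0}, maternHalfDeriv ℓ (r + n) ≤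
      exp (-1 / (2 * ℓ)) / (2 * ℓ ^ 2 * (1 - exp (-1 / (2 * ℓ))) ^ 2) := by
    rcases le_total 0 r with hr | hr
    · exact tsum_maternHalfDeriv_shift_le hℓ hℓ'.le hr hr₁
    · rw [← tsum_nonzero_int_neg_add_of_even (maternHalfDeriv_even ℓ)]
      exact tsum_maternHalfDeriv_shift_le hℓ hℓ'.le (by linarith) (by linarith)
  set a := exp (-1 / (2 * ℓ))
  calc ∑' n : {n : ℤ // n ≠ 0}, maternHalfDeriv ℓ (r + n) ≤ a / (2 * ℓ ^ 2 * (1 - a) ^ 2) := hsum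
    _ = a / (2 * ℓ ^ 2) * (1 / (1 - a) ^ 2) := by rw [mul_one_div, div_div]
    _ ≤ a / (2 * ℓ ^ 2) * (1 + 2 * ℓ + (2 * ℓ) ^ 2) := by
        gcongr; exact one_div_sq_one_sub_exp_neg_one_div_le (by positivity)
    _ = a * (1 + 2 * ℓ + 4 * ℓ ^ 2) / (2 * ℓ ^ 2) := by ring
end

section
/- Let m ∈ ℕ with m > 2√3. Then ∑_{k ∈ ℤ³, ‖k‖₂ ≥ m/2} ‖k‖₂^{-4} ≤ ∫_{{x ∈ ℝ³ : ‖x‖₂ ≥ m/2 - √3}} ‖x‖₂^{-4} dx = 8π/(m - 2√3). -/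
/-!
Place the closed unit cube `Q(k)` around each lattice point `k`. These cubes overlap only in
null sets and, since `‖x - k‖ ≤ √3 / 2` on `Q(k)`, lie in `{‖x‖ ≥ m/2 - √3}` when `‖k‖ ≥ m/2`.
So it suffices that `‖k‖⁻⁴ ≤ ∫_{Q(k)} ‖x‖⁻⁴` whenever `‖k‖ ≥ 2`. Symmetrising `y ↦ -y`, the
integrand `‖k + y‖⁻⁴` may be replaced by its even part, which dominates an explicit quadratic
polynomial in `y`; integrating it with the second moments `∫_{Q(0)} yᵢ yⱼ = δᵢⱼ / 12` of the cube
gives the bound. The integral over the region is `4π / r` by polar coordinates.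
-/

open Real MeasureTheory Set Module Function

lemma tsum_le_setIntegral_of_le_setIntegral {α ι : Type*} [MeasurableSpace α] {μ : Measure α}
    [Countable ι] {f : ι → ℝ} {g : α → ℝ} {s : ι → Set α} {t : Set α}
    (hs : ∀ i, NullMeasurableSet (s i) μ) (hd : Pairwise (AEDisjoint μ on s)) (hst : ∀ i, s i ⊆ t)
    (hg : IntegrableOn g t μ) (hg0 : 0 ≤ᵐ[μ.restrict t] g) (hf0 : ∀ i, 0 ≤ f i)
    (hfg : ∀ i, f i ≤ ∫ x in s i, g x ∂μ) :
    ∑' i, f i ≤ ∫ x in t, g x ∂μ := by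
  have hsum := hasSum_integral_iUnion_ae hs hd (hg.mono_set (iUnion_subset hst))
  calc ∑' i, f i ≤ ∑' i, ∫ x in s i, g x ∂μ :=
        (Summable.of_nonneg_of_le hf0 hfg hsum.summable).tsum_le_tsum hfg hsum.summable
    _ = ∫ x in ⋃ i, s i, g x ∂μ := hsum.tsum_eq
    _ ≤ ∫ x in t, g x ∂μ := setIntegral_mono_set hg hg0 (iUnion_subset hst).eventuallyLE

section UnitCube

variable {ι : Type*}

def unitCube (c : EuclideanSpace ℝ ι) : Set (EuclideanSpace ℝ ι) :=
  {x | ∀ i, |x i - c i| ≤ 1 / 2}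

lemma toLp_preimage_unitCube (c : EuclideanSpace ℝ ι) :
    WithLp.toLp 2 ⁻¹' unitCube c = univ.pi fun i => Icc (c i - 1 / 2) (c i + 1 / 2) := by
  ext y
  simp only [unitCube, mem_preimage, mem_ofPred_eq, mem_univ_pi, mem_Icc, abs_le]
  exact forall_congr' fun i => by constructor <;> intro h <;> constructor <;> linarith [h.1, h.2]

lemma neg_unitCube_zero : -unitCube (0 : EuclideanSpace ℝ ι) = unitCube 0 := by
  ext x
  simp [unitCube]

lemma add_left_preimage_unitCube (c : EuclideanSpace ℝ ι) :
    (c + ·) ⁻¹' unitCube c = unitCube 0 := by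
  ext x
  simp [unitCube]

lemma isClosed_unitCube (c : EuclideanSpace ℝ ι) : IsClosed (unitCube c) := by
  simp only [unitCube, ofPred_forall]
  exact isClosed_iInter fun i => isClosed_le (by fun_prop) continuous_const

variable [Fintype ι]

lemma measurableSet_unitCube (c : EuclideanSpace ℝ ι) : MeasurableSet (unitCube c) :=
  (isClosed_unitCube c).measurableSet

lemma volume_unitCube (c : EuclideanSpace ℝ ι) : volume (unitCube c) = 1 := by
  rw [← (PiLp.volume_preserving_toLp ι).measure_preimage
    (measurableSet_unitCube c).nullMeasurableSet, toLp_preimage_unitCube, volume_pi_pi]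
  norm_num

lemma norm_sub_le_of_mem_unitCube {c x : EuclideanSpace ℝ ι} (hx : x ∈ unitCube c) :
    ‖x - c‖ ≤ √(Fintype.card ι) / 2 := by
  have hsq : ‖x - c‖ ^ 2 ≤ Fintype.card ι / 4 := by
    rw [EuclideanSpace.real_norm_sq_eq, div_eq_mul_one_div, ← nsmul_eq_mul, ← Finset.card_univ,
      ← Finset.sum_const]
    refine Finset.sum_le_sum fun i _ => ?_
    have := abs_le.mp (hx i)
    simp only [PiLp.sub_apply]
    nlinarith
  calc ‖x - c‖ = √(‖x - c‖ ^ 2) := (sqrt_sq (norm_nonneg _)).symm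
    _ ≤ √(Fintype.card ι / 4) := sqrt_le_sqrt hsq
    _ = √(Fintype.card ι) / 2 := by
      rw [sqrt_div' _ (by norm_num), show (4:ℝ) = 2 ^ 2 by norm_num, sqrt_sq (by norm_num)]

lemma isCompact_unitCube (c : EuclideanSpace ℝ ι) : IsCompact (unitCube c) :=
  Metric.isCompact_of_isClosed_isBounded (isClosed_unitCube c) <|
    (Metric.isBounded_closedBall (x := c)).subset fun _ hx =>
      mem_closedBall_iff_norm.mpr (norm_sub_le_of_mem_unitCube hx)

lemma norm_sub_le_norm_of_mem_unitCube {c x : EuclideanSpace ℝ ι} (hx : x ∈ unitCube c) :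
    ‖c‖ - √(Fintype.card ι) / 2 ≤ ‖x‖ := by
  have := norm_sub_le_of_mem_unitCube hx
  have := norm_sub_norm_le c x
  rw [norm_sub_rev] at this
  linarith

lemma aedisjoint_unitCube {a b : EuclideanSpace ℝ ι} {i : ι} (h : 1 ≤ |a i - b i|) :
    AEDisjoint volume (unitCube a) (unitCube b) := by
  have hplane : volume {x : EuclideanSpace ℝ ι | x i = (a i + b i) / 2} = 0 := by
    rw [← (PiLp.volume_preserving_toLp ι).measure_preimage
      (measurableSet_eq_fun (by fun_prop) measurable_const).nullMeasurableSet]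
    exact Measure.pi_hyperplane _ i _
  refine measure_mono_null (fun x ⟨hxa, hxb⟩ => ?_) hplane
  have := abs_le.mp (hxa i)
  have := abs_le.mp (hxb i)
  rcases le_abs'.mp h with h | h
  · show x i = _; linarith
  · show x i = _; linarith

lemma aedisjoint_unitCube_intCast {k l : ι → ℤ} (h : k ≠ l) :
    AEDisjoint volume (unitCube (WithLp.toLp 2 fun i => (k i : ℝ)))
      (unitCube (WithLp.toLp 2 fun i => (l i : ℝ))) := by
  obtain ⟨i, hi⟩ := Function.ne_iff.mp h
  refine aedisjoint_unitCube (i := i) ?_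
  have : (1 : ℝ) ≤ ((|k i - l i| : ℤ) : ℝ) := by exact_mod_cast Int.one_le_abs (sub_ne_zero.mpr hi)
  simpa using this

lemma setIntegral_unitCube_zero_prod (f : ι → ℝ → ℝ) :
    ∫ y in unitCube 0, ∏ i, f i (y i) = ∏ i, ∫ t in Icc (-(1 / 2)) (1 / 2), f i t := by
  rw [← (PiLp.volume_preserving_toLp ι).setIntegral_preimage_emb
    (MeasurableEquiv.toLp 2 (ι → ℝ)).measurableEmbedding, toLp_preimage_unitCube, volume_pi,
    Measure.restrict_pi_pi]
  simpa using integral_fintype_prod_eq_prod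
    (μ := fun _ => volume.restrict (Icc (-(1 / 2) : ℝ) (1 / 2))) f

lemma integral_Icc_neg_half_half_pow (n : ℕ) :
    ∫ t in Icc (-(1 / 2) : ℝ) (1 / 2), t ^ n
      = ((1 / 2) ^ (n + 1) - (-(1 / 2)) ^ (n + 1)) / (n + 1) := by
  rw [integral_Icc_eq_integral_Ioc, ← intervalIntegral.integral_of_le (by norm_num), integral_pow]

lemma setIntegral_unitCube_zero_mul_apply [DecidableEq ι] (i j : ι) :
    ∫ y in unitCube 0, y i * y j = if i = j then 1 / 12 else 0 := by
  have hprod (y : EuclideanSpace ℝ ι) :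
      y i * y j = ∏ l, (if l = i then y l else 1) * (if l = j then y l else 1) := by
    rw [Finset.prod_mul_distrib, Finset.prod_ite_eq', Finset.prod_ite_eq']
    simp
  simp_rw [hprod]
  rw [setIntegral_unitCube_zero_prod fun l t => (if l = i then t else 1) * (if l = j then t else 1)]
  split_ifs with hij
  · subst hij
    rw [Finset.prod_eq_single i (fun l _ hl => by simp [hl]; norm_num) (by simp)]
    simpa [← sq] using (integral_Icc_neg_half_half_pow 2).trans (by norm_num)
  · refine Finset.prod_eq_zero (Finset.mem_univ i) ?_
    simpa [hij] using (integral_Icc_neg_half_half_pow 1).trans (by norm_num)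

lemma setIntegral_unitCube_eq_setIntegral_unitCube_zero_add {G : Type*} [NormedAddCommGroup G]
    [NormedSpace ℝ G] (g : EuclideanSpace ℝ ι → G) (c : EuclideanSpace ℝ ι) :
    ∫ x in unitCube c, g x = ∫ y in unitCube 0, g (c + y) := by
  rw [← add_left_preimage_unitCube c]
  exact ((measurePreserving_add_left volume c).setIntegral_preimage_emb
    (measurableEmbedding_addLeft c) g _).symm

lemma setIntegral_unitCube_zero_comp_neg {G : Type*} [NormedAddCommGroup G] [NormedSpace ℝ G]
    (g : EuclideanSpace ℝ ι → G) :
    ∫ y in unitCube 0, g (-y) = ∫ y in unitCube 0, g y := by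
  have := (Measure.measurePreserving_neg (volume : Measure (EuclideanSpace ℝ ι)))
    |>.setIntegral_preimage_emb (Homeomorph.neg _).measurableEmbedding g (unitCube 0)
  rwa [Set.neg_preimage, neg_unitCube_zero] at this

lemma integrableOn_unitCube_of_continuous {f : EuclideanSpace ℝ ι → ℝ} (hf : Continuous f)
    (c : EuclideanSpace ℝ ι) : IntegrableOn f (unitCube c) :=
  hf.continuousOn.integrableOn_compact (isCompact_unitCube c)

lemma setIntegral_unitCube_zero_norm_sq :
    ∫ y in unitCube (0 : EuclideanSpace ℝ ι), ‖y‖ ^ 2 = Fintype.card ι / 12 := by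
  classical
  simp_rw [EuclideanSpace.real_norm_sq_eq, sq]
  rw [integral_finsetSum _ fun i _ => integrableOn_unitCube_of_continuous (by fun_prop) 0]
  simp [setIntegral_unitCube_zero_mul_apply, ← div_eq_mul_inv]

lemma setIntegral_unitCube_zero_inner_sq (c : EuclideanSpace ℝ ι) :
    ∫ y in unitCube 0, inner ℝ c y ^ 2 = ‖c‖ ^ 2 / 12 := by
  classical
  have hexp (y : EuclideanSpace ℝ ι) : inner ℝ c y ^ 2 = ∑ i, ∑ j, c i * c j * (y i * y j) := by
    simp only [PiLp.inner_apply, RCLike.inner_apply, conj_trivial, sq, Finset.sum_mul_sum]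
    exact Finset.sum_congr rfl fun i _ => Finset.sum_congr rfl fun j _ => by ring
  simp_rw [hexp]
  rw [integral_finsetSum _ fun i _ => integrableOn_unitCube_of_continuous (by fun_prop) 0]
  have hrow (i : ι) : ∫ y in unitCube 0, ∑ j, c i * c j * (y i * y j) = c i * c i / 12 := by
    rw [integral_finsetSum _ fun j _ => integrableOn_unitCube_of_continuous (by fun_prop) 0]
    simp [integral_const_mul, setIntegral_unitCube_zero_mul_apply, ← div_eq_mul_inv]
  simp_rw [hrow]
  rw [EuclideanSpace.real_norm_sq_eq, Finset.sum_div]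
  simp [sq]

end UnitCube

section Radial

lemma pow_smul_indicator_one_div_pow {n p : ℕ} (hn : 1 ≤ n) {r : ℝ} (hr : 0 < r) :
    (fun t : ℝ => t ^ (n - 1) • (Ici r).indicator (fun t => 1 / t ^ p) t)
      = (Ici r).indicator fun t => t ^ ((n : ℝ) - 1 - p) := by
  ext t
  by_cases ht : t ∈ Ici r
  · have ht0 : 0 < t := hr.trans_le ht
    rw [indicator_of_mem ht, indicator_of_mem ht, smul_eq_mul, rpow_sub ht0, rpow_sub ht0,
      rpow_one, rpow_natCast, rpow_natCast, pow_sub₀ t ht0.ne' hn]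
    field_simp
  · simp [indicator_of_notMem ht]

variable {E : Type*} [NormedAddCommGroup E]

lemma indicator_one_div_norm_pow (p : ℕ) (r : ℝ) :
    {x : E | r ≤ ‖x‖}.indicator (fun x => 1 / ‖x‖ ^ p)
      = fun x => (Ici r).indicator (fun t => 1 / t ^ p) ‖x‖ := by
  ext x
  by_cases hx : r ≤ ‖x‖ <;> simp [indicator, hx]

variable [NormedSpace ℝ E] [FiniteDimensional ℝ E] [Nontrivial E] [MeasurableSpace E] [BorelSpace E]
  (μ : Measure E) [μ.IsAddHaarMeasure] {p : ℕ} {r : ℝ}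

lemma integrableOn_one_div_norm_pow (hp : finrank ℝ E < p) (hr : 0 < r) :
    IntegrableOn (fun x : E => 1 / ‖x‖ ^ p) {x | r ≤ ‖x‖} μ := by
  rw [← integrable_indicator_iff (measurableSet_le measurable_const measurable_norm),
    indicator_one_div_norm_pow, integrable_fun_norm_addHaar,
    pow_smul_indicator_one_div_pow finrank_pos hr]
  refine (integrable_indicator_iff measurableSet_Ici |>.mpr ?_).integrableOn
  rw [integrableOn_Ici_iff_integrableOn_Ioi]
  have hp' : (finrank ℝ E : ℝ) < p := by exact_mod_cast hp
  exact integrableOn_Ioi_rpow_of_lt (by linarith) hr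

lemma setIntegral_one_div_norm_pow (hp : finrank ℝ E < p) (hr : 0 < r) :
    ∫ x in {x | r ≤ ‖x‖}, 1 / ‖x‖ ^ p ∂μ
      = finrank ℝ E * μ.real (Metric.ball 0 1) * r ^ ((finrank ℝ E : ℝ) - p)
          / (p - finrank ℝ E) := by
  have hp' : (finrank ℝ E : ℝ) < p := by exact_mod_cast hp
  rw [← integral_indicator (measurableSet_le measurable_const measurable_norm),
    indicator_one_div_norm_pow, integral_fun_norm_addHaar,
    pow_smul_indicator_one_div_pow finrank_pos hr, setIntegral_indicator measurableSet_Ici,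
    inter_eq_right.mpr (Ici_subset_Ioi.mpr hr), integral_Ici_eq_integral_Ioi,
    integral_Ioi_rpow_of_lt (by linarith) hr,
    show (finrank ℝ E : ℝ) - 1 - p + 1 = finrank ℝ E - p by ring, nsmul_eq_mul, smul_eq_mul,
    neg_div, ← div_neg, neg_sub]
  ring

end Radial

lemma setIntegral_one_div_norm_pow_four_fin_three {r : ℝ} (hr : 0 < r) :
    ∫ x in {x : EuclideanSpace ℝ (Fin 3) | r ≤ ‖x‖}, 1 / ‖x‖ ^ 4 = 4 * π / r := by
  rw [setIntegral_one_div_norm_pow volume (by simp) hr, finrank_euclideanSpace_fin, measureReal_def,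
    EuclideanSpace.volume_ball_fin_three]
  norm_num [rpow_neg_one, ENNReal.toReal_ofReal (by positivity : 0 ≤ π * 4 / 3)]
  field_simp

lemma le_one_div_add_sq_add_one_div_sub_sq {s u : ℝ} (hu : u ^ 2 < s ^ 2) :
    2 / s ^ 2 + 6 * u ^ 2 / s ^ 4 ≤ 1 / (s + u) ^ 2 + 1 / (s - u) ^ 2 := by
  have hs : 0 < s ^ 2 := by nlinarith
  have hsu : 0 < s ^ 2 - u ^ 2 := by linarith
  have hsum : 1 / (s + u) ^ 2 + 1 / (s - u) ^ 2 = 2 * (s ^ 2 + u ^ 2) / (s ^ 2 - u ^ 2) ^ 2 := by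
    have h1 : s + u ≠ 0 := fun h => by
      rw [show u = -s by linarith, neg_sq] at hu; exact lt_irrefl _ hu
    have h2 : s - u ≠ 0 := fun h => by
      rw [show u = s by linarith] at hu; exact lt_irrefl _ hu
    rw [show s ^ 2 - u ^ 2 = (s + u) * (s - u) by ring]
    field_simp
    ring
  have hs4 : 0 < s ^ 4 := by rw [show s ^ 4 = (s ^ 2) ^ 2 by ring]; positivity
  rw [hsum, div_add_div _ _ hs.ne' hs4.ne', div_le_div_iff₀ (by positivity) (pow_pos hsu 2)]
  have : 0 ≤ u ^ 4 * (5 * s ^ 2 - 3 * u ^ 2) := mul_nonneg (by positivity) (by nlinarith)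
  nlinarith

lemma two_div_sq_sub_le_two_div_add_sq {D w : ℝ} (hD : 0 < D) (hw : 0 ≤ w) :
    2 / D ^ 2 - 4 * w / D ^ 3 ≤ 2 / (D + w) ^ 2 := by
  have hkey : 2 * D ^ 3 - (2 * D - 4 * w) * (D + w) ^ 2 = 6 * D * w ^ 2 + 4 * w ^ 3 := by ring
  rw [show 2 / D ^ 2 - 4 * w / D ^ 3 = (2 * D - 4 * w) / D ^ 3 by field_simp,
    div_le_div_iff₀ (by positivity) (by positivity)]
  nlinarith [mul_nonneg hD.le (sq_nonneg w), pow_nonneg hw 3]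

section Minorant

variable {F : Type*} [NormedAddCommGroup F] [InnerProductSpace ℝ F]

/-- The second-order Taylor polynomial of the even part of `y ↦ ‖c + y‖⁻⁴`, with `‖c‖⁸` enlarged
to `(‖c‖² + 3/4)⁴` so that it stays below on `‖y‖² ≤ 3/4`. -/
noncomputable def quadraticMinorant (c y : F) : ℝ :=
  1 / ‖c‖ ^ 4 - 2 / ‖c‖ ^ 6 * ‖y‖ ^ 2 + 12 / (‖c‖ ^ 2 + 3 / 4) ^ 4 * inner ℝ c y ^ 2

lemma two_mul_quadraticMinorant_le {c y : F} (hc : 2 ≤ ‖c‖) (hy : ‖y‖ ^ 2 ≤ 3 / 4) :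
    2 * quadraticMinorant c y ≤ 1 / ‖c + y‖ ^ 4 + 1 / ‖c - y‖ ^ 4 := by
  set D := ‖c‖ ^ 2
  set w := ‖y‖ ^ 2
  set u := 2 * inner ℝ c y
  have hD : 4 ≤ D := by nlinarith
  have hw : 0 ≤ w := by positivity
  have hu : u ^ 2 < (D + w) ^ 2 := by
    have : inner ℝ c y ^ 2 ≤ D * w := by
      rw [← mul_pow, ← sq_abs]
      gcongr
      exact abs_real_inner_le_norm c y
    nlinarith
  have hplus : ‖c + y‖ ^ 4 = (D + w + u) ^ 2 := by
    rw [show 4 = 2 * 2 by rfl, pow_mul, norm_add_sq_real]; ring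
  have hminus : ‖c - y‖ ^ 4 = (D + w - u) ^ 2 := by
    rw [show 4 = 2 * 2 by rfl, pow_mul, norm_sub_sq_real]; ring
  have hfar : 6 * u ^ 2 / (D + 3 / 4) ^ 4 ≤ 6 * u ^ 2 / (D + w) ^ 4 :=
    div_le_div_of_nonneg_left (by positivity) (by positivity) (by gcongr)
  calc 2 * quadraticMinorant c y = 2 / D ^ 2 - 4 * w / D ^ 3 + 6 * u ^ 2 / (D + 3 / 4) ^ 4 := by
        simp only [quadraticMinorant, D, w, u]; ring
    _ ≤ 2 / (D + w) ^ 2 + 6 * u ^ 2 / (D + w) ^ 4 := by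
        linarith [two_div_sq_sub_le_two_div_add_sq (by linarith : 0 < D) hw]
    _ ≤ 1 / ‖c + y‖ ^ 4 + 1 / ‖c - y‖ ^ 4 := by
        rw [hplus, hminus]; exact le_one_div_add_sq_add_one_div_sub_sq hu

end Minorant

section CubeMean

local notation "E³" => EuclideanSpace ℝ (Fin 3)

lemma norm_sq_le_of_mem_unitCube_zero {y : E³} (hy : y ∈ unitCube 0) : ‖y‖ ^ 2 ≤ 3 / 4 := by
  have h := norm_sub_le_of_mem_unitCube hy
  rw [sub_zero, Fintype.card_fin, Nat.cast_ofNat] at h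
  calc ‖y‖ ^ 2 ≤ (√3 / 2) ^ 2 := by gcongr
    _ = 3 / 4 := by rw [div_pow, sq_sqrt (by norm_num)]; norm_num

lemma setIntegral_unitCube_zero_quadraticMinorant (c : E³) :
    ∫ y in unitCube 0, quadraticMinorant c y
      = 1 / ‖c‖ ^ 4 - 1 / (2 * ‖c‖ ^ 6) + ‖c‖ ^ 2 / (‖c‖ ^ 2 + 3 / 4) ^ 4 := by
  have hint : IntegrableOn (fun _ : E³ => 1 / ‖c‖ ^ 4) (unitCube 0) :=
    integrableOn_const (by simp [volume_unitCube])
  unfold quadraticMinorant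
  rw [integral_add ?_ (integrableOn_unitCube_of_continuous (by fun_prop) 0),
    integral_sub hint (integrableOn_unitCube_of_continuous (by fun_prop) 0),
    integral_const_mul, integral_const_mul, setIntegral_unitCube_zero_norm_sq,
    setIntegral_unitCube_zero_inner_sq, setIntegral_const, measureReal_def, volume_unitCube]
  simp only [ENNReal.toReal_one, one_smul, Fintype.card_fin]
  · field_simp
    ring
  · exact hint.sub (integrableOn_unitCube_of_continuous (by fun_prop) 0)

lemma one_div_norm_pow_four_le_setIntegral_quadraticMinorant {c : E³} (hc : 2 ≤ ‖c‖) :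
    1 / ‖c‖ ^ 4 ≤ ∫ y in unitCube 0, quadraticMinorant c y := by
  have hD : 4 ≤ ‖c‖ ^ 2 := by nlinarith
  have hbound : (‖c‖ ^ 2 + 3 / 4) ^ 4 ≤ 2 * (‖c‖ ^ 2) ^ 4 := by
    nlinarith [mul_nonneg (sub_nonneg.mpr hD) (sq_nonneg (‖c‖ ^ 2)),
      pow_le_pow_left₀ (by norm_num) hD 3]
  have : 1 / (2 * ‖c‖ ^ 6) ≤ ‖c‖ ^ 2 / (‖c‖ ^ 2 + 3 / 4) ^ 4 := by
    rw [div_le_div_iff₀ (by positivity) (by positivity)]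
    nlinarith
  rw [setIntegral_unitCube_zero_quadraticMinorant]
  linarith

lemma one_div_norm_pow_four_le_setIntegral_unitCube {c : E³} (hc : 2 ≤ ‖c‖) :
    1 / ‖c‖ ^ 4 ≤ ∫ x in unitCube c, 1 / ‖x‖ ^ 4 := by
  have hlt (y : E³) (hy : y ∈ unitCube 0) : ‖y‖ < ‖c‖ := by
    nlinarith [norm_sq_le_of_mem_unitCube_zero hy, norm_nonneg y]
  have hplus : IntegrableOn (fun y : E³ => 1 / ‖c + y‖ ^ 4) (unitCube 0) :=
    ContinuousOn.integrableOn_compact (isCompact_unitCube 0) <|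
      continuousOn_const.div (by fun_prop) fun y hy => pow_ne_zero 4 <| norm_ne_zero_iff.mpr
        fun h => (hlt y hy).ne' (by rw [add_eq_zero_iff_eq_neg.mp h, norm_neg])
  have hminus : IntegrableOn (fun y : E³ => 1 / ‖c - y‖ ^ 4) (unitCube 0) :=
    ContinuousOn.integrableOn_compact (isCompact_unitCube 0) <|
      continuousOn_const.div (by fun_prop) fun y hy => pow_ne_zero 4 <| norm_ne_zero_iff.mpr
        fun h => (hlt y hy).ne' (by rw [sub_eq_zero.mp h])
  have hreflect : ∫ y in unitCube 0, 1 / ‖c - y‖ ^ 4 = ∫ y in unitCube 0, 1 / ‖c + y‖ ^ 4 := by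
    simpa only [sub_eq_add_neg] using setIntegral_unitCube_zero_comp_neg fun y => 1 / ‖c + y‖ ^ 4
  have hmono : ∫ y in unitCube 0, 2 * quadraticMinorant c y
      ≤ ∫ y in unitCube 0, (1 / ‖c + y‖ ^ 4 + 1 / ‖c - y‖ ^ 4) :=
    setIntegral_mono_on
      (integrableOn_unitCube_of_continuous (by unfold quadraticMinorant; fun_prop) 0)
      (hplus.add hminus) (measurableSet_unitCube 0)
      fun y hy => two_mul_quadraticMinorant_le hc (norm_sq_le_of_mem_unitCube_zero hy)
  rw [integral_const_mul, integral_add hplus hminus, hreflect] at hmono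
  rw [setIntegral_unitCube_eq_setIntegral_unitCube_zero_add]
  linarith [one_div_norm_pow_four_le_setIntegral_quadraticMinorant hc]

end CubeMean

theorem lattice_sum_inv_norm_pow_four_le (m : ℕ) (hm : 2*Real.sqrt 3 < (m:ℝ)) :
    ((∑' k : {k : Fin 3 → ℤ //
        (m:ℝ)/2 ≤ ‖(show EuclideanSpace ℝ (Fin 3) from WithLp.toLp 2 (fun i => ((k : Fin 3 → ℤ) i : ℝ)))‖},
        1/‖(show EuclideanSpace ℝ (Fin 3) from WithLp.toLp 2 (fun i => ((k : Fin 3 → ℤ) i : ℝ)))‖^4)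
      ≤ ∫ x in {x : EuclideanSpace ℝ (Fin 3) | (m:ℝ)/2 - Real.sqrt 3 ≤ ‖x‖}, 1/‖x‖^4) ∧
    ((∫ x in {x : EuclideanSpace ℝ (Fin 3) | (m:ℝ)/2 - Real.sqrt 3 ≤ ‖x‖}, 1/‖x‖^4)
      = 8*π/((m:ℝ) - 2*Real.sqrt 3)) := by
  have hm4 : 4 ≤ (m : ℝ) := by
    have : 3 < m := by
      have : 3 / 2 < √3 := lt_sqrt_of_sq_lt (by norm_num)
      exact_mod_cast (show (3 : ℝ) < m by linarith)
    exact_mod_cast this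
  have hr : 0 < (m : ℝ) / 2 - √3 := by linarith
  refine ⟨tsum_le_setIntegral_of_le_setIntegral
    (fun _ => (measurableSet_unitCube _).nullMeasurableSet)
    (fun k l hkl => aedisjoint_unitCube_intCast (Subtype.coe_injective.ne hkl))
    (fun k x hx => ?_) (integrableOn_one_div_norm_pow volume (by simp) hr)
    (ae_of_all _ fun _ => by positivity) (fun _ => by positivity)
    (fun k => one_div_norm_pow_four_le_setIntegral_unitCube (by linarith [k.2])), ?_⟩
  · have := norm_sub_le_norm_of_mem_unitCube hx
    rw [Fintype.card_fin, Nat.cast_ofNat] at this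
    exact (show (m : ℝ) / 2 - √3 ≤ ‖x‖ by linarith [k.2, sqrt_nonneg 3])
  · rw [setIntegral_one_div_norm_pow_four_fin_three hr]
    field_simp
    ring
end

section
/- For 0 < ℓ < 1/2, ∑_{n=1}^∞ ((2n+1)/2)·e^{-(2n+1)/(2ℓ)} ≤ e^{-1/(2ℓ)} ∫_0^∞ (x + 1/2) e^{-x/ℓ} dx = e^{-1/(2ℓ)}·(ℓ² + ℓ/2), and consequently (1/ℓ²)(e^{-1/(2ℓ)}/2 + 2∑_{n=1}^∞ ((2n+1)/2)e^{-(2n+1)/(2ℓ)}) ≤ e^{-1/(2ℓ)}(1+2ℓ+4ℓ²)/(2ℓ²). -/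
open Real MeasureTheory Set

/-!
The `n`-th summand equals `e^{-1/(2ℓ)} f(n + 1)` with `f x = (x + 1/2) e^{-x/ℓ}`. Since
`(x + c) e^{-x/ℓ}` decreases once `x + c ≥ ℓ`, and `ℓ < 1/2`, `f` decreases on `[0, ∞)`, so its
right-endpoint Riemann sums are dominated by `∫₀^∞ f`, a Gamma integral equal to `ℓ² + ℓ/2`.
-/

theorem integrableOn_pow_mul_exp_neg_div_Ioi {ℓ : ℝ} (hℓ : 0 < ℓ) (n : ℕ) :
    IntegrableOn (fun x : ℝ => x ^ n * exp (-x / ℓ)) (Ioi 0) := by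
  have := integrableOn_rpow_mul_exp_neg_mul_rpow (s := n) (p := 1) (b := ℓ⁻¹)
    (by linarith [n.cast_nonneg (α := ℝ)]) one_pos (inv_pos.2 hℓ)
  refine this.congr_fun (fun x _ => ?_) measurableSet_Ioi
  simp [Real.rpow_natCast, div_eq_inv_mul]

theorem integral_pow_mul_exp_neg_div_Ioi {ℓ : ℝ} (hℓ : 0 < ℓ) (n : ℕ) :
    ∫ x in Ioi 0, x ^ n * exp (-x / ℓ) = n.factorial * ℓ ^ (n + 1) := by
  have := integral_rpow_mul_exp_neg_mul_Ioi (a := n + 1) (r := ℓ⁻¹) (by positivity)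
    (inv_pos.2 hℓ)
  rw [Real.Gamma_nat_eq_factorial, one_div, inv_inv, ← Nat.cast_succ, Real.rpow_natCast] at this
  rw [mul_comm, ← Nat.succ_eq_add_one, ← this]
  refine setIntegral_congr_fun measurableSet_Ioi (fun x _ => ?_)
  simp [Real.rpow_natCast, div_eq_inv_mul]

theorem integrableOn_add_mul_exp_neg_div_Ioi {ℓ : ℝ} (hℓ : 0 < ℓ) (c : ℝ) :
    IntegrableOn (fun x : ℝ => (x + c) * exp (-x / ℓ)) (Ioi 0) :=
  ((integrableOn_pow_mul_exp_neg_div_Ioi hℓ 1).add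
    ((integrableOn_pow_mul_exp_neg_div_Ioi hℓ 0).const_mul c)).congr_fun
    (fun x _ => by simp only [Pi.add_apply, pow_one, pow_zero]; ring) measurableSet_Ioi

theorem integral_add_mul_exp_neg_div_Ioi {ℓ : ℝ} (hℓ : 0 < ℓ) (c : ℝ) :
    ∫ x in Ioi 0, (x + c) * exp (-x / ℓ) = ℓ ^ 2 + c * ℓ := by
  have h0 := integrableOn_pow_mul_exp_neg_div_Ioi hℓ 0
  have h1 := integrableOn_pow_mul_exp_neg_div_Ioi hℓ 1
  have i0 := integral_pow_mul_exp_neg_div_Ioi hℓ 0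
  have i1 := integral_pow_mul_exp_neg_div_Ioi hℓ 1
  simp only [pow_zero, pow_one, one_mul] at h0 h1 i0 i1
  simp only [add_mul]
  rw [integral_add h1 (h0.const_mul c), integral_const_mul, i0, i1]
  simp

theorem antitoneOn_add_mul_exp_neg_div {ℓ : ℝ} (hℓ : 0 < ℓ) (c : ℝ) :
    AntitoneOn (fun x : ℝ => (x + c) * exp (-x / ℓ)) (Ici (ℓ - c)) := by
  intro x hx y _ hxy
  simp only [mem_Ici] at hx
  have hxc : 0 < x + c := by linarith
  have hratio : (y + c) / (x + c) ≤ exp ((y - x) / ℓ) := calc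
    (y + c) / (x + c) = 1 + (y - x) / (x + c) := by field_simp; ring
    _ ≤ 1 + (y - x) / ℓ := by gcongr; linarith
    _ ≤ exp ((y - x) / ℓ) := by linarith [add_one_le_exp ((y - x) / ℓ)]
  calc (y + c) * exp (-y / ℓ)
      ≤ (x + c) * exp ((y - x) / ℓ) * exp (-y / ℓ) := by
        gcongr; rwa [div_le_iff₀' hxc] at hratio
    _ = (x + c) * exp (-x / ℓ) := by
        rw [mul_assoc, ← exp_add]; congr 2; ring

theorem tsum_le_setIntegral_Ioi_of_antitoneOn {f : ℝ → ℝ} (hf : AntitoneOn f (Ici 0))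
    (hf_nonneg : ∀ x, 0 ≤ x → 0 ≤ f x) (hf_int : IntegrableOn f (Ioi 0)) :
    ∑' n : ℕ, f (n + 1) ≤ ∫ x in Ioi 0, f x := by
  refine Real.tsum_le_of_sum_range_le (fun n => hf_nonneg _ (by positivity)) fun N => ?_
  calc ∑ n ∈ Finset.range N, f (n + 1)
      = ∑ n ∈ Finset.range N, f (0 + ↑(n + 1)) := by simp
    _ ≤ ∫ x in (0 : ℝ)..0 + N, f x := (hf.mono Icc_subset_Ici_self).sum_le_integral
    _ ≤ ∫ x in Ioi 0, f x := by
        rw [zero_add, intervalIntegral.integral_of_le N.cast_nonneg]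
        exact setIntegral_mono_set hf_int
          ((ae_restrict_mem measurableSet_Ioi).mono fun x hx => hf_nonneg x (le_of_lt hx))
          (Filter.Eventually.of_forall Ioc_subset_Ioi_self)

theorem deriv_matern_series_integral_comparison (ℓ : ℝ) (hℓ : 0 < ℓ) (hℓ' : ℓ < 1/2) :
    ((∑' n : ℕ, ((2*((n:ℝ)+1)+1)/2) * Real.exp (-(2*((n:ℝ)+1)+1)/(2*ℓ))
        ≤ Real.exp (-1/(2*ℓ)) * ∫ x in Set.Ioi (0:ℝ), (x + 1/2) * Real.exp (-x/ℓ)) ∧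
      ((∫ x in Set.Ioi (0:ℝ), (x + 1/2) * Real.exp (-x/ℓ)) = ℓ^2 + ℓ/2)) ∧
    (1/ℓ^2) * (Real.exp (-1/(2*ℓ))/2
        + 2 * ∑' n : ℕ, ((2*((n:ℝ)+1)+1)/2) * Real.exp (-(2*((n:ℝ)+1)+1)/(2*ℓ)))
      ≤ Real.exp (-1/(2*ℓ)) * (1 + 2*ℓ + 4*ℓ^2) / (2*ℓ^2) := by
  set f : ℝ → ℝ := fun x => (x + 1/2) * exp (-x / ℓ)
  have hsummand : ∀ x : ℝ,
      (2 * x + 1) / 2 * exp (-(2 * x + 1) / (2 * ℓ)) = exp (-1 / (2 * ℓ)) * f x := by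
    intro x
    rw [mul_left_comm, ← exp_add]
    congr 2
    · ring
    · field_simp; ring
  have hintegral : ∫ x in Ioi 0, f x = ℓ ^ 2 + ℓ / 2 := by
    rw [integral_add_mul_exp_neg_div_Ioi hℓ]; ring
  have hseries : ∑' n : ℕ, f (n + 1) ≤ ∫ x in Ioi 0, f x :=
    tsum_le_setIntegral_Ioi_of_antitoneOn
      ((antitoneOn_add_mul_exp_neg_div hℓ _).mono (Ici_subset_Ici.2 (by linarith)))
      (fun x hx => by positivity)
      (integrableOn_add_mul_exp_neg_div_Ioi hℓ _)
  have hbound : ∑' n : ℕ, ((2*((n:ℝ)+1)+1)/2) * exp (-(2*((n:ℝ)+1)+1)/(2*ℓ))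
      ≤ exp (-1/(2*ℓ)) * ∫ x in Ioi 0, f x := by
    simp_rw [hsummand, tsum_mul_left]
    gcongr
  refine ⟨⟨hbound, hintegral⟩, ?_⟩
  rw [hintegral] at hbound
  calc _ ≤ (1 / ℓ ^ 2) * (exp (-1 / (2 * ℓ)) / 2
          + 2 * (exp (-1 / (2 * ℓ)) * (ℓ ^ 2 + ℓ / 2))) := by gcongr
    _ = _ := by field_simp; ring
end
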